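/- Fix n ≥ 2, α ∈ (0,n), and λ ∈ ℝ. Let R : ℝⁿ → ℝⁿ be the reflection across the hyperplane {x : x·e₁ = λ}, i.e. R(x) = x − 2((x·e₁) − λ) e₁. Let E ⊂ ℝⁿ be a bounded Lebesgue measurable set, let Σ = E ∩ {x : x·e₁ < λ}, and suppose the reflected set R(Σ) is contained in E up to a Lebesgue null set. Let G = (E ∩ {x : x·e₁ > λ}) \ R(Σ). Then for every x ∈ ℝⁿ, v_E(R(x)) − v_E(x) = ∫_G ( |R(x) − y|^{−α} − |x − y|^{−α} ) dy. -/

import Mathlib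

open MeasureTheory Metric Set Bornology

noncomputable def rieszPotential {n : ℕ} (α : ℝ) (E : Set (EuclideanSpace ℝ (Fin n)))
    (x : EuclideanSpace ℝ (Fin n)) : ℝ :=
  ∫ y in E, ‖x - y‖ ^ (-α)

open Function Module
open scoped RealInnerProductSpace

/-! The reflection `R` is a measure-preserving isometric involution, so
`v_E(R x) = ∫_E |x - R y|^{-α} dy`. Over the `R`-invariant set `E ∩ R⁻¹(E)` the substitution
`y ↦ R y` shows that `|x - R y|^{-α}` and `|x - y|^{-α}` have the same integral, so only
`E \ R⁻¹(E)` contributes. That set agrees with `G` up to the hyperplane and `R⁻¹(R(Σ) \ E)`, both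
null: a point of `E` whose mirror image leaves `E` lies in `Σ`, on the hyperplane, or beyond it
and outside `R(Σ)`. -/

section Integrability

variable {V : Type*} [NormedAddCommGroup V] [NormedSpace ℝ V] [FiniteDimensional ℝ V]
  [MeasurableSpace V] [BorelSpace V] {μ : Measure V} [μ.IsAddHaarMeasure] {α : ℝ}

theorem locallyIntegrable_rpow_neg_norm (hd : 1 ≤ finrank ℝ V) (hα : α < finrank ℝ V) :
    LocallyIntegrable (fun y : V => ‖y‖ ^ (-α)) μ :=
  locallyIntegrable_of_norm_le_rpow (C := 1) hd hα
    (ae_of_all _ fun y => by rw [one_mul, Real.norm_of_nonneg (by positivity)])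
    (by fun_prop : Measurable fun y : V => ‖y‖ ^ (-α)).aestronglyMeasurable

theorem integrableOn_rpow_neg_norm_sub_of_isBounded (hd : 1 ≤ finrank ℝ V)
    (hα : α < finrank ℝ V) (x : V) {s : Set V} (hs : IsBounded s) :
    IntegrableOn (fun y => ‖x - y‖ ^ (-α)) s μ := by
  obtain ⟨r, hr⟩ := hs.subset_closedBall x
  have hball : IntegrableOn (fun y : V => ‖y‖ ^ (-α)) (closedBall 0 r) μ :=
    (locallyIntegrable_rpow_neg_norm hd hα).integrableOn_isCompact (isCompact_closedBall 0 r)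
  have hpre : (x - ·) ⁻¹' closedBall 0 r = closedBall x r := by
    ext y; simp [dist_eq_norm, norm_sub_rev]
  refine IntegrableOn.mono_set ?_ hr
  rw [← hpre]
  exact ((μ.measurePreserving_sub_left x).integrableOn_comp_preimage
    (MeasurableEquiv.subLeft x).measurableEmbedding).2 hball

end Integrability

section Involution

variable {X F : Type*} [MeasurableSpace X] [NormedAddCommGroup F] [NormedSpace ℝ F]
  {μ : Measure X} {R : X → X}

theorem Function.Involutive.measurableEmbedding (hR : Involutive R) (hm : Measurable R) :
    MeasurableEmbedding R :=
  (MeasurableEquiv.ofInvolutive R hR hm).measurableEmbedding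

theorem MeasureTheory.MeasurePreserving.setIntegral_comp_of_preimage_eq
    (hR : MeasurePreserving R μ μ) (he : MeasurableEmbedding R) {S : Set X} (hS : R ⁻¹' S = S)
    (f : X → F) :
    ∫ y in S, f (R y) ∂μ = ∫ y in S, f y ∂μ := by
  conv_lhs => rw [← hS]
  exact hR.setIntegral_preimage_emb he f S

theorem setIntegral_comp_sub_setIntegral_of_involutive (hinv : Involutive R)
    (hR : MeasurePreserving R μ μ) {E : Set X} (hE : MeasurableSet E) {f : X → F}
    (hf : IntegrableOn f E μ) (hfR : IntegrableOn (fun y => f (R y)) E μ) :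
    ∫ y in E, f (R y) ∂μ - ∫ y in E, f y ∂μ = ∫ y in E \ R ⁻¹' E, (f (R y) - f y) ∂μ := by
  have hRE : MeasurableSet (R ⁻¹' E) := hR.measurable hE
  have hsym : R ⁻¹' (E ∩ R ⁻¹' E) = E ∩ R ⁻¹' E := by
    rw [preimage_inter, ← preimage_comp, hinv.comp_self, preimage_id, inter_comm]
  have hinvariant :=
    hR.setIntegral_comp_of_preimage_eq (hinv.measurableEmbedding hR.measurable) hsym f
  rw [← integral_inter_add_sdiff hRE hf, ← integral_inter_add_sdiff hRE hfR, hinvariant,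
    integral_sub (hfR.mono_set sdiff_subset) (hf.mono_set sdiff_subset)]
  abel

end Involution

section Reflection

variable {V : Type*} [NormedAddCommGroup V] [InnerProductSpace ℝ V] {u : V}

/-- For a unit vector `u`, the reflection across the hyperplane `{x | ⟪x, u⟫ = c}`. -/
def hyperplaneReflection (u : V) (c : ℝ) (x : V) : V := x - (2 * (⟪x, u⟫ - c)) • u

theorem inner_hyperplaneReflection (hu : ‖u‖ = 1) (c : ℝ) (x : V) :
    ⟪hyperplaneReflection u c x, u⟫ = 2 * c - ⟪x, u⟫ := by
  rw [hyperplaneReflection, inner_sub_left, real_inner_smul_left, real_inner_self_eq_norm_sq, hu]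
  ring

theorem hyperplaneReflection_involutive (hu : ‖u‖ = 1) (c : ℝ) :
    Involutive (hyperplaneReflection u c) := by
  intro x
  rw [hyperplaneReflection, inner_hyperplaneReflection hu, hyperplaneReflection]
  module

theorem hyperplaneReflection_eq_add_comp_reflection (hu : ‖u‖ = 1) (c : ℝ) :
    hyperplaneReflection u c = (· + (2 * c) • u) ∘ (ℝ ∙ u)ᗮ.reflection := by
  ext x
  rw [comp_apply, Submodule.reflection_orthogonal_apply, Submodule.reflection_apply,
    Submodule.starProjection_unit_singleton ℝ hu, hyperplaneReflection, real_inner_comm]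
  module

theorem isometry_hyperplaneReflection (hu : ‖u‖ = 1) (c : ℝ) :
    Isometry (hyperplaneReflection u c) := by
  rw [hyperplaneReflection_eq_add_comp_reflection hu]
  exact (IsometryEquiv.addRight _).isometry.comp (LinearIsometryEquiv.isometry _)

theorem norm_hyperplaneReflection_sub (hu : ‖u‖ = 1) (c : ℝ) (x y : V) :
    ‖hyperplaneReflection u c x - y‖ = ‖x - hyperplaneReflection u c y‖ := by
  rw [← dist_eq_norm, ← dist_eq_norm, ← (isometry_hyperplaneReflection hu c).dist_eq,
    hyperplaneReflection_involutive hu]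

variable [FiniteDimensional ℝ V] [MeasurableSpace V] [BorelSpace V]

theorem measurePreserving_hyperplaneReflection (hu : ‖u‖ = 1) (c : ℝ) :
    MeasurePreserving (hyperplaneReflection u c) := by
  rw [hyperplaneReflection_eq_add_comp_reflection hu]
  exact (measurePreserving_add_right _ _).comp (LinearIsometryEquiv.measurePreserving _)

theorem MeasureTheory.Measure.addHaar_setOf_inner_eq (μ : Measure V) [μ.IsAddHaarMeasure]
    (hu : u ≠ 0) (c : ℝ) : μ {x | ⟪x, u⟫ = c} = 0 := by
  rcases eq_empty_or_nonempty {x : V | ⟪x, u⟫ = c} with h | ⟨p, hp⟩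
  · rw [h, measure_empty]
  have hmem : ∀ y, y ∈ AffineSubspace.mk' p (ℝ ∙ u)ᗮ ↔ ⟪y, u⟫ = c := by
    intro y
    rw [AffineSubspace.mem_mk', vsub_eq_sub, Submodule.mem_orthogonal_singleton_iff_inner_right,
      inner_sub_right, real_inner_comm, real_inner_comm p, hp.out, sub_eq_zero]
  have hne : AffineSubspace.mk' p (ℝ ∙ u)ᗮ ≠ ⊤ := by
    intro htop
    have := (hmem (p + u)).1 (htop ▸ AffineSubspace.mem_top ℝ V _)
    rw [inner_add_left, hp.out, add_eq_left, real_inner_self_eq_norm_sq] at this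
    exact hu (norm_eq_zero.1 (pow_eq_zero_iff two_ne_zero |>.1 this))
  convert Measure.addHaar_affineSubspace μ _ hne
  ext y; exact (hmem y).symm

theorem hyperplaneReflection_diff_preimage_ae_eq (hu : ‖u‖ = 1) (c : ℝ) {E : Set V}
    (hnull : volume (hyperplaneReflection u c '' (E ∩ {x | ⟪x, u⟫ < c}) \ E) = 0) :
    (E \ hyperplaneReflection u c ⁻¹' E : Set V) =ᵐ[volume]
      ((E ∩ {x | c < ⟪x, u⟫}) \ hyperplaneReflection u c '' (E ∩ {x | ⟪x, u⟫ < c}) :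
        Set V) := by
  set R := hyperplaneReflection u c
  set Sig := E ∩ {x | ⟪x, u⟫ < c}
  have hinv : Involutive R := hyperplaneReflection_involutive hu c
  have hsub : (E ∩ {x | c < ⟪x, u⟫}) \ R '' Sig ⊆ E \ R ⁻¹' E := by
    rintro y ⟨⟨hyE, hy⟩, hyS⟩
    refine ⟨hyE, fun hRy => hyS ⟨R y, ⟨hRy, ?_⟩, hinv y⟩⟩
    change ⟪R y, u⟫ < c
    rw [inner_hyperplaneReflection hu]
    linarith [hy.out]
  have hrest : (E \ R ⁻¹' E) \ ((E ∩ {x | c < ⟪x, u⟫}) \ R '' Sig) ⊆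
      R ⁻¹' (R '' Sig \ E) ∪ {x | ⟪x, u⟫ = c} := by
    rintro y ⟨⟨hyE, hRy⟩, hyG⟩
    rcases lt_trichotomy ⟪y, u⟫ c with h | h | h
    · exact Or.inl ⟨mem_image_of_mem R ⟨hyE, h⟩, hRy⟩
    · exact Or.inr h
    · refine absurd ⟨⟨hyE, h⟩, ?_⟩ hyG
      rintro ⟨z, hz, rfl⟩
      exact hRy (by rw [mem_preimage, hinv z]; exact hz.1)
  have hu₀ : u ≠ 0 := by rintro rfl; simp at hu
  refine ae_eq_set.2 ⟨measure_mono_null hrest (measure_union_null ?_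
    (Measure.addHaar_setOf_inner_eq volume hu₀ c)), by rw [sdiff_eq_empty.2 hsub, measure_empty]⟩
  exact (measurePreserving_hyperplaneReflection hu c).quasiMeasurePreserving.preimage_null hnull

end Reflection

/-- Reflection formula for the Riesz potential: if `E ⊆ ℝⁿ` is bounded measurable, `R` is
reflection across the hyperplane `{x·e₁ = λ}`, `Σ = E ∩ {x·e₁ < λ}` and `R(Σ) ⊆ E` up to a
null set, then with `G = (E ∩ {x·e₁ > λ}) \ R(Σ)` we have
`v_E(R x) − v_E(x) = ∫_G (|R x − y|^{−α} − |x − y|^{−α}) dy` for every `x`. -/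
theorem rieszPotential_reflection_identity
    (n : ℕ) (hn : 2 ≤ n) (α : ℝ) (hα₁ : α < n) (lam : ℝ)
    (E : Set (EuclideanSpace ℝ (Fin n))) (hE : MeasurableSet E) (hbd : IsBounded E) :
    let e₁ : EuclideanSpace ℝ (Fin n) := EuclideanSpace.single ⟨0, by omega⟩ 1
    let R : EuclideanSpace ℝ (Fin n) → EuclideanSpace ℝ (Fin n) :=
      fun x => x - (2 * ((inner ℝ x e₁ : ℝ) - lam)) • e₁
    let Sig : Set (EuclideanSpace ℝ (Fin n)) :=
      E ∩ {x : EuclideanSpace ℝ (Fin n) | (inner ℝ x e₁ : ℝ) < lam}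
    volume (R '' Sig \ E) = 0 →
    let G : Set (EuclideanSpace ℝ (Fin n)) :=
      (E ∩ {x : EuclideanSpace ℝ (Fin n) | lam < (inner ℝ x e₁ : ℝ)}) \ (R '' Sig)
    ∀ x : EuclideanSpace ℝ (Fin n),
      rieszPotential α E (R x) - rieszPotential α E x
        = ∫ y in G, (‖R x - y‖ ^ (-α) - ‖x - y‖ ^ (-α)) := by
  intro e₁ R Sig hnull G x
  have he₁ : ‖e₁‖ = 1 := by simp [e₁]
  have hRx : ∀ y, ‖R x - y‖ = ‖x - R y‖ := norm_hyperplaneReflection_sub he₁ lam x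
  have hd : 1 ≤ finrank ℝ (EuclideanSpace ℝ (Fin n)) := by
    rw [finrank_euclideanSpace_fin]; omega
  have hα : α < finrank ℝ (EuclideanSpace ℝ (Fin n)) := by rwa [finrank_euclideanSpace_fin]
  have hintegrable z :=
    integrableOn_rpow_neg_norm_sub_of_isBounded (μ := volume) hd hα z hbd
  have hdiff := setIntegral_comp_sub_setIntegral_of_involutive
    (hyperplaneReflection_involutive he₁ lam) (measurePreserving_hyperplaneReflection he₁ lam) hE
    (hintegrable x) ((hintegrable (R x)).congr_fun (fun y _ => congrArg (· ^ (-α)) (hRx y)) hE)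
  simp only [rieszPotential, hRx]
  exact hdiff.trans
    (setIntegral_congr_set (hyperplaneReflection_diff_preimage_ae_eq he₁ lam hnull))
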